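/- Let d ≥ 2 and suppose (i₁,j₁), (i₂,j₂), (i₃,j₃) are pairs of indices in {0,…,d} with i₁< j₁, i₂ < j₂, i₃ < j₃, and s₁, s₂, s₃ ∈ {+1, −1} are signs such that s₁ k_{i₁ j₁} + s₂ k_{i₂ j₂} + s₃ k_{i₃ j₃} = 0 in ℝ^{d+1}. Then there exist indices a < b < c in {0,…,d} such that the multiset of unordered pairs {{i₁,j₁}, {i₂,j₂}, {i₃,j₃}} equals {{a,b}, {b,c}, {a,c}}; i.e., the three edges form a triangle. -/

import Mathlib

/-!
Scaling by `√2`, the `x`-th coordinate of the relation reads `∑ₖ sₖ (δ_{x iₖ} − δ_{x jₖ}) = 0`,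
a sum with one term `±1` for each edge through `x` and `0` otherwise; hence every vertex lies on
an even number of the three edges, that is on none or on two of them. The smallest vertex `a` then
lies on two edges `{a, p}` and `{a, q}`, and every vertex of the third edge must lie on one of
these but is not `a`, so the third edge is `{p, q}` and `p ≠ q`.
-/

noncomputable section

/-- The simplex root `k_{ij} = (eᵢ − eⱼ)/√2` in `ℝ^{d+1}`. -/
def simplexRoot (d : ℕ) (i j : Fin (d + 1)) : Fin (d + 1) → ℝ :=
  (Real.sqrt 2)⁻¹ • (Pi.single i 1 - Pi.single j 1)

lemma Finset.exists_ne_eq_pair_of_mem {α : Type*} [DecidableEq α] {s : Finset α} {a : α}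
    (hs : s.card = 2) (ha : a ∈ s) : ∃ b, a ≠ b ∧ s = {a, b} := by
  obtain ⟨x, y, hxy, rfl⟩ := Finset.card_eq_two.mp hs
  rcases Finset.mem_insert.mp ha with rfl | ha
  · exact ⟨y, hxy, rfl⟩
  · rw [Finset.mem_singleton.mp ha]
    exact ⟨x, hxy.symm, Finset.pair_comm _ _⟩

lemma Multiset.exists_eq_triple_of_countP_eq_two {β : Type*} {M : Multiset β} {P : β → Prop}
    [DecidablePred P] (hM : card M = 3) (hP : M.countP P = 2) :
    ∃ A B C, P A ∧ P B ∧ ¬P C ∧ M = {A, B, C} := by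
  obtain ⟨A, B, hAB⟩ := card_eq_two.mp ((M.countP_eq_card_filter P).symm.trans hP)
  obtain ⟨C, hC⟩ : ∃ C, M.filter (¬P ·) = {C} := by
    refine card_eq_one.mp ?_
    have hcard := congrArg card (M.filter_add_not P)
    rw [card_add, ← countP_eq_card_filter, hP, hM] at hcard
    omega
  refine ⟨A, B, C, (mem_filter.mp (hAB ▸ by simp : A ∈ M.filter P)).2,
    (mem_filter.mp (hAB ▸ by simp : B ∈ M.filter P)).2,
    (mem_filter.mp (hC ▸ by simp : C ∈ M.filter (¬P ·))).2, ?_⟩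
  rw [← M.filter_add_not P, hAB, hC]
  rfl

section Triangle

variable {α : Type*} [LinearOrder α]

lemma exists_lt_lt_triangle_eq {a p q : α} (hp : a < p) (hq : a < q) (hpq : p ≠ q) :
    ∃ b c, a < b ∧ b < c ∧
      ({{a, p}, {a, q}, {p, q}} : Multiset (Finset α)) = {{a, b}, {b, c}, {a, c}} := by
  rcases hpq.lt_or_gt with h | h
  · exact ⟨p, q, hp, h, by rw [Multiset.pair_comm ({a, q} : Finset α)]⟩
  · refine ⟨q, p, hq, h, ?_⟩
    rw [Finset.pair_comm q p, Multiset.insert_eq_cons, Multiset.insert_eq_cons,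
      Multiset.cons_swap, Multiset.pair_comm]
    rfl

theorem Multiset.exists_triangle_of_even_countP_mem {M : Multiset (Finset α)}
    (hM : card M = 3) (hedge : ∀ E ∈ M, E.card = 2) (heven : ∀ x, Even (M.countP (x ∈ ·))) :
    ∃ a b c, a < b ∧ b < c ∧ M = {{a, b}, {b, c}, {a, c}} := by
  set V := M.toFinset.sup id
  have hV : V.Nonempty := by
    obtain ⟨E, hE⟩ := card_pos_iff_exists_mem.mp (by omega : 0 < card M)
    obtain ⟨x, hx⟩ := Finset.card_pos.mp (by rw [hedge E hE]; omega : 0 < E.card)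
    exact ⟨x, Finset.mem_sup.mpr ⟨E, mem_toFinset.mpr hE, hx⟩⟩
  set a := V.min' hV
  have ha_le : ∀ E ∈ M, ∀ y ∈ E, a ≤ y := fun E hE y hy =>
    V.min'_le y (Finset.mem_sup.mpr ⟨E, mem_toFinset.mpr hE, hy⟩)
  have hdeg : M.countP (a ∈ ·) = 2 := by
    have hpos : 0 < M.countP (a ∈ ·) :=
      countP_pos.mpr (by simpa [V, Finset.mem_sup] using V.min'_mem hV)
    have hle := hM ▸ M.countP_le_card (a ∈ ·)
    obtain ⟨k, hk⟩ := heven a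
    omega
  obtain ⟨A, B, C, haA, haB, haC, hABC⟩ := exists_eq_triple_of_countP_eq_two hM hdeg
  have hAM : A ∈ M := by simp [hABC]
  have hBM : B ∈ M := by simp [hABC]
  have hCM : C ∈ M := by simp [hABC]
  obtain ⟨p, hap, rfl⟩ := Finset.exists_ne_eq_pair_of_mem (hedge A hAM) haA
  obtain ⟨q, haq, rfl⟩ := Finset.exists_ne_eq_pair_of_mem (hedge B hBM) haB
  have hCpq : C ⊆ {p, q} := by
    intro z hz
    have hza : z ≠ a := fun h => haC (h ▸ hz)
    by_contra hzpq
    have hz_even := heven z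
    rw [Finset.mem_insert, Finset.mem_singleton, not_or] at hzpq
    simp [hABC, countP_eq_card_filter, filter_singleton, hz, hza, hzpq] at hz_even
  have hC_eq : C = {p, q} :=
    Finset.eq_of_subset_of_card_le hCpq (hedge C hCM ▸ Finset.card_le_two)
  have hpq : p ≠ q := Finset.card_pair_eq_two_iff.mp (hC_eq ▸ hedge C hCM)
  obtain ⟨b, c, hab, hbc, h⟩ := exists_lt_lt_triangle_eq
    ((ha_le _ hAM p (by simp)).lt_of_ne hap) ((ha_le _ hBM q (by simp)).lt_of_ne haq) hpq
  exact ⟨a, b, c, hab, hbc, by rw [hABC, hC_eq, h]⟩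

end Triangle

lemma sign_mul_single_sub_single_cases {α : Type*} [DecidableEq α] {i j : α} (hij : i ≠ j)
    {s : ℝ} (hs : s = 1 ∨ s = -1) (x : α) :
    let t := s * (Pi.single i 1 - Pi.single j 1 : α → ℝ) x
    x ∈ ({i, j} : Finset α) ∧ (t = 1 ∨ t = -1) ∨ x ∉ ({i, j} : Finset α) ∧ t = 0 := by
  by_cases hi : x = i
  · subst hi
    rcases hs with rfl | rfl <;> simp [hij]
  by_cases hj : x = j
  · subst hj
    rcases hs with rfl | rfl <;> simp [hij.symm]
  simp [hi, hj]

lemma Multiset.even_countP_mem_of_add_add_eq_zero {α : Type*} [DecidableEq α]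
    {E₁ E₂ E₃ : Finset α} {x : α} {t₁ t₂ t₃ : ℝ} (h : t₁ + t₂ + t₃ = 0)
    (h₁ : x ∈ E₁ ∧ (t₁ = 1 ∨ t₁ = -1) ∨ x ∉ E₁ ∧ t₁ = 0)
    (h₂ : x ∈ E₂ ∧ (t₂ = 1 ∨ t₂ = -1) ∨ x ∉ E₂ ∧ t₂ = 0)
    (h₃ : x ∈ E₃ ∧ (t₃ = 1 ∨ t₃ = -1) ∨ x ∉ E₃ ∧ t₃ = 0) :
    Even (({E₁, E₂, E₃} : Multiset (Finset α)).countP (x ∈ ·)) := by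
  rcases h₁ with ⟨h₁, rfl | rfl⟩ | ⟨h₁, rfl⟩ <;> rcases h₂ with ⟨h₂, rfl | rfl⟩ | ⟨h₂, rfl⟩ <;>
    rcases h₃ with ⟨h₃, rfl | rfl⟩ | ⟨h₃, rfl⟩ <;> norm_num at h <;>
    simp [countP_eq_card_filter, filter_singleton, h₁, h₂, h₃]

lemma sqrt_two_smul_simplexRoot (d : ℕ) (i j : Fin (d + 1)) :
    Real.sqrt 2 • simplexRoot d i j = Pi.single i 1 - Pi.single j 1 := by
  rw [simplexRoot, smul_inv_smul₀ (by positivity)]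

theorem simplex_triangle_selection_general (d : ℕ)
    (i₁ j₁ i₂ j₂ i₃ j₃ : Fin (d + 1))
    (h1 : i₁ < j₁) (h2 : i₂ < j₂) (h3 : i₃ < j₃)
    (s₁ s₂ s₃ : ℝ)
    (hs₁ : s₁ = 1 ∨ s₁ = -1) (hs₂ : s₂ = 1 ∨ s₂ = -1) (hs₃ : s₃ = 1 ∨ s₃ = -1)
    (hsum : s₁ • simplexRoot d i₁ j₁ + s₂ • simplexRoot d i₂ j₂ + s₃ • simplexRoot d i₃ j₃
      = 0) :
    ∃ a b c : Fin (d + 1), a < b ∧ b < c ∧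
      ({ {i₁, j₁}, {i₂, j₂}, {i₃, j₃} } : Multiset (Finset (Fin (d + 1)))) =
        { {a, b}, {b, c}, {a, c} } := by
  have hscaled := congrArg (Real.sqrt 2 • ·) hsum
  simp only [smul_add, smul_comm (Real.sqrt 2) (_ : ℝ) (simplexRoot d _ _),
    sqrt_two_smul_simplexRoot, smul_zero] at hscaled
  refine Multiset.exists_triangle_of_even_countP_mem (by simp) ?_ fun x => ?_
  · simp [h1.ne, h2.ne, h3.ne]
  · exact Multiset.even_countP_mem_of_add_add_eq_zero
      (by simpa only [Pi.add_apply, Pi.smul_apply, smul_eq_mul, Pi.zero_apply]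
        using congrFun hscaled x)
      (sign_mul_single_sub_single_cases h1.ne hs₁ x) (sign_mul_single_sub_single_cases h2.ne hs₂ x)
      (sign_mul_single_sub_single_cases h3.ne hs₃ x)

/-- Fourier selection: if a signed combination of three simplex roots (with signs `±1`)
vanishes, then the three edges form a triangle `{a,b}, {b,c}, {a,c}` with `a < b < c`. -/
theorem simplex_triangle_selection (d : ℕ) (hd : 2 ≤ d)
    (i₁ j₁ i₂ j₂ i₃ j₃ : Fin (d + 1))
    (h1 : i₁ < j₁) (h2 : i₂ < j₂) (h3 : i₃ < j₃)
    (s₁ s₂ s₃ : ℝ)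
    (hs₁ : s₁ = 1 ∨ s₁ = -1) (hs₂ : s₂ = 1 ∨ s₂ = -1) (hs₃ : s₃ = 1 ∨ s₃ = -1)
    (hsum : s₁ • simplexRoot d i₁ j₁ + s₂ • simplexRoot d i₂ j₂ + s₃ • simplexRoot d i₃ j₃
      = 0) :
    ∃ a b c : Fin (d + 1), a < b ∧ b < c ∧
      ({ {i₁, j₁}, {i₂, j₂}, {i₃, j₃} } : Multiset (Finset (Fin (d + 1)))) =
        { {a, b}, {b, c}, {a, c} } :=
  simplex_triangle_selection_general d i₁ j₁ i₂ j₂ i₃ j₃ h1 h2 h3 s₁ s₂ s₃ hs₁ hs₂ hs₃ hsum
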